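/- arXiv:2104.13182 — 2 statements merged into one kernel-verified Lean document; each statement's English description precedes it below -/
import Mathlib

section
/- Let A_L = 4π² λ_B λ_R ∫_0^∞ x (1 − exp(−2π λ_B ∫_0^{φ(x)} r p_L(r) dr)) K_0(2π x √(λ_B λ_R)) dx, where 0 ≤ p_L(r) ≤ 1 and φ(x) ≥ 0. Then A_L ≤ P_L := 1 − exp(−2π λ_B ∫_0^∞ r p_L(r) dr), with the bound strict whenever ∫_0^∞ r p_L(r) dr > ∫_0^{φ(x)} r p_L(r) dr on a set of positive measure. Equivalently, the RIS-association probability A_R = 1 − A_L satisfies A_R ≥ exp(−2π λ_B ∫_0^∞ r p_L(r) dr). -/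
open Real MeasureTheory

/-- Modified Bessel function of the second kind of order 0,
via the representation `K₀(x) = ∫_0^∞ exp(−x cosh t) dt`. -/
noncomputable def besselK0 (x : ℝ) : ℝ :=
  ∫ t in Set.Ioi (0:ℝ), Real.exp (-(x * Real.cosh t))

/-! Both bounds compare the integrand `x (1 - exp(-2πλ_B I(x))) K₀(…)` pointwise with
`P_L · x K₀(…)`, since `I(x) = ∫_0^{φ(x)} r p_L(r) dr ≤ ∫_0^∞ r p_L(r) dr`; the normalisation
`4π²λ_Bλ_R ∫ x K₀(…) = 1` turns the integrated comparison into `A_L ≤ P_L`. Strictness comes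
from `K₀ > 0`, so the weight `x K₀(…)` is positive wherever `I(x)` falls short. -/

section IntegralComparison

variable {α : Type*} [MeasurableSpace α] {μ : Measure α}

theorem integral_lt_integral_of_nonneg_of_ae_le {f g : α → ℝ} (hf : 0 ≤ᵐ[μ] f)
    (hgi : Integrable g μ) (hle : f ≤ᵐ[μ] g) (hlt : μ {x | f x < g x} ≠ 0) :
    ∫ x, f x ∂μ < ∫ x, g x ∂μ := by
  by_cases hfi : Integrable f μ
  · rw [← sub_pos, ← integral_sub hgi hfi,
      integral_pos_iff_support_of_nonneg_ae (hle.mono fun x h => sub_nonneg.2 h) (hgi.sub hfi)]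
    exact (pos_iff_ne_zero.2 hlt).trans_le
      (measure_mono fun x hx => sub_ne_zero.2 (ne_of_gt hx))
  · rw [integral_undef hfi, integral_pos_iff_support_of_nonneg_ae (hf.trans hle) hgi]
    refine (pos_iff_ne_zero.2 hlt).trans_le (measure_mono_ae ?_)
    filter_upwards [hf] with x hx hfg
    exact (hx.trans_lt hfg).ne'

variable {u g : α → ℝ} {P : ℝ}

theorem integral_mul_le_const_mul_integral (hgi : Integrable g μ) (hg : 0 ≤ᵐ[μ] g)
    (hu : 0 ≤ᵐ[μ] u) (huP : ∀ᵐ x ∂μ, u x ≤ P) :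
    ∫ x, u x * g x ∂μ ≤ P * ∫ x, g x ∂μ := by
  rw [← integral_const_mul]
  refine integral_mono_of_nonneg ?_ (hgi.const_mul P) ?_
  · filter_upwards [hu, hg] with x hux hgx using mul_nonneg hux hgx
  · filter_upwards [hg, huP] with x hgx huPx using mul_le_mul_of_nonneg_right huPx hgx

theorem integral_mul_lt_const_mul_integral (hgi : Integrable g μ) (hg : 0 ≤ᵐ[μ] g)
    (hu : 0 ≤ᵐ[μ] u) (huP : ∀ᵐ x ∂μ, u x ≤ P) (hlt : μ {x | u x < P ∧ 0 < g x} ≠ 0) :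
    ∫ x, u x * g x ∂μ < P * ∫ x, g x ∂μ := by
  rw [← integral_const_mul]
  refine integral_lt_integral_of_nonneg_of_ae_le ?_ (hgi.const_mul P) ?_ ?_
  · filter_upwards [hu, hg] with x hux hgx using mul_nonneg hux hgx
  · filter_upwards [hg, huP] with x hgx huPx using mul_le_mul_of_nonneg_right huPx hgx
  · exact fun h => hlt (measure_mono_null (fun x hx => mul_lt_mul_of_pos_right hx.1 hx.2) h)

end IntegralComparison

theorem integrableOn_exp_neg_mul_cosh {y : ℝ} (hy : 0 < y) :
    IntegrableOn (fun t => exp (-(y * cosh t))) (Set.Ioi 0) := by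
  refine (exp_neg_integrableOn_Ioi 0 hy).mono' (by fun_prop) ?_
  refine ae_restrict_of_forall_mem measurableSet_Ioi fun t ht => ?_
  rw [norm_of_nonneg (exp_nonneg _), exp_le_exp, neg_mul, neg_le_neg_iff]
  exact mul_le_mul_of_nonneg_left
    ((self_lt_sinh_iff.2 ht).trans (sinh_lt_cosh t)).le hy.le

theorem besselK0_nonneg (y : ℝ) : 0 ≤ besselK0 y :=
  setIntegral_nonneg measurableSet_Ioi fun _ _ => (exp_pos _).le

theorem besselK0_pos {y : ℝ} (hy : 0 < y) : 0 < besselK0 y := by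
  rw [besselK0, integral_pos_iff_support_of_nonneg_ae
    (Filter.Eventually.of_forall fun _ => (exp_pos _).le) (integrableOn_exp_neg_mul_cosh hy)]
  simp [Function.support, (exp_pos _).ne']

theorem strictMono_one_sub_exp_neg_mul {κ : ℝ} (hκ : 0 < κ) :
    StrictMono fun t => 1 - exp (-(κ * t)) :=
  fun _ _ h => by simpa using mul_lt_mul_of_pos_left h hκ

theorem one_sub_exp_neg_mul_nonneg {κ t : ℝ} (hκ : 0 ≤ κ) (ht : 0 ≤ t) :
    0 ≤ 1 - exp (-(κ * t)) :=
  sub_nonneg.2 (exp_le_one_iff.2 (neg_nonpos.2 (mul_nonneg hκ ht)))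

theorem setIntegral_Ioc_le_setIntegral_Ioi {f : ℝ → ℝ} {a : ℝ} (hf : IntegrableOn f (Set.Ioi a))
    (hf0 : ∀ r ∈ Set.Ioi a, 0 ≤ f r) (b : ℝ) :
    ∫ r in Set.Ioc a b, f r ≤ ∫ r in Set.Ioi a, f r :=
  setIntegral_mono_set hf (ae_restrict_of_forall_mem measurableSet_Ioi hf0)
    Set.Ioc_subset_Ioi_self.eventuallyLE

theorem association_probability_bounds_general (lamB lamR : ℝ) (hB : 0 < lamB) (hR : 0 < lamR)
    (pL : ℝ → ℝ) (hpL0 : ∀ r, 0 ≤ pL r)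
    (hint : IntegrableOn (fun r => r * pL r) (Set.Ioi (0:ℝ)))
    (φ : ℝ → ℝ)
    (hnorm : 4 * π ^ 2 * lamB * lamR *
      ∫ x in Set.Ioi (0:ℝ), x * besselK0 (2 * π * x * Real.sqrt (lamB * lamR)) = 1)
    (AL : ℝ)
    (hAL : AL = 4 * π ^ 2 * lamB * lamR *
      ∫ x in Set.Ioi (0:ℝ),
        x * (1 - Real.exp (-(2 * π * lamB * ∫ r in Set.Ioc (0:ℝ) (φ x), r * pL r))) *
          besselK0 (2 * π * x * Real.sqrt (lamB * lamR))) :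
    AL ≤ 1 - Real.exp (-(2 * π * lamB * ∫ r in Set.Ioi (0:ℝ), r * pL r)) ∧
    ((volume {x : ℝ | x ∈ Set.Ioi (0:ℝ) ∧
        (∫ r in Set.Ioc (0:ℝ) (φ x), r * pL r) < ∫ r in Set.Ioi (0:ℝ), r * pL r} ≠ 0) →
      AL < 1 - Real.exp (-(2 * π * lamB * ∫ r in Set.Ioi (0:ℝ), r * pL r))) ∧
    Real.exp (-(2 * π * lamB * ∫ r in Set.Ioi (0:ℝ), r * pL r)) ≤ 1 - AL := by
  set C := 4 * π ^ 2 * lamB * lamR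
  set c := ∫ r in Set.Ioi (0:ℝ), r * pL r
  set I := fun x => ∫ r in Set.Ioc (0:ℝ) (φ x), r * pL r
  set g := fun x => x * besselK0 (2 * π * x * √(lamB * lamR))
  set u := fun x => 1 - exp (-(2 * π * lamB * I x))
  set P := 1 - exp (-(2 * π * lamB * c))
  have hAL' : AL = C * ∫ x in Set.Ioi 0, u x * g x := by
    rw [hAL]; congr 2; funext x; ring
  have hgi : IntegrableOn g (Set.Ioi 0) :=
    .of_integral_ne_zero (right_ne_zero_of_mul_eq_one hnorm)
  have hg : 0 ≤ᵐ[volume.restrict (Set.Ioi 0)] g := ae_restrict_of_forall_mem measurableSet_Ioi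
    fun x hx => mul_nonneg (le_of_lt hx) (besselK0_nonneg _)
  have hκ : 0 < 2 * π * lamB := by positivity
  have hu : ∀ᵐ x ∂volume.restrict (Set.Ioi 0), 0 ≤ u x := .of_forall fun x =>
    one_sub_exp_neg_mul_nonneg hκ.le
      (setIntegral_nonneg measurableSet_Ioc fun r hr => mul_nonneg hr.1.le (hpL0 r))
  have hIc : ∀ x, I x ≤ c := fun x => setIntegral_Ioc_le_setIntegral_Ioi hint
    (fun r hr => mul_nonneg (le_of_lt hr) (hpL0 r)) (φ x)
  have huP : ∀ᵐ x ∂volume.restrict (Set.Ioi 0), u x ≤ P :=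
    .of_forall fun x => (strictMono_one_sub_exp_neg_mul hκ).monotone (hIc x)
  have hC : 0 < C := by positivity
  have hALP : AL ≤ P := calc
    AL ≤ C * (P * ∫ x in Set.Ioi 0, g x) := hAL' ▸
      mul_le_mul_of_nonneg_left (integral_mul_le_const_mul_integral hgi hg hu huP) hC.le
    _ = P := by rw [mul_left_comm, hnorm, mul_one]
  refine ⟨hALP, fun hS => ?_, by linarith⟩
  have hlt : volume.restrict (Set.Ioi 0) {x | u x < P ∧ 0 < g x} ≠ 0 := by
    rw [Measure.restrict_apply' measurableSet_Ioi]
    refine fun h => hS (measure_mono_null ?_ h)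
    rintro x ⟨hx, hIx⟩
    have hg_pos : 0 < g x := mul_pos hx
      (besselK0_pos (mul_pos (mul_pos (by positivity) hx) (sqrt_pos.2 (mul_pos hB hR))))
    exact ⟨⟨strictMono_one_sub_exp_neg_mul hκ hIx, hg_pos⟩, hx⟩
  calc AL < C * (P * ∫ x in Set.Ioi 0, g x) := hAL' ▸
      mul_lt_mul_of_pos_left (integral_mul_lt_const_mul_integral hgi hg hu huP hlt) hC
    _ = P := by rw [mul_left_comm, hnorm, mul_one]

/-- Bounds for the LoS association probability: `A_L ≤ P_L`, with strict inequality when the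
inner integral is strictly deficient on a set of positive measure; equivalently, the RIS
association probability `A_R = 1 − A_L` satisfies `A_R ≥ exp(−2π λ_B ∫_0^∞ r p_L(r) dr)`. -/
theorem association_probability_bounds (lamB lamR : ℝ) (hB : 0 < lamB) (hR : 0 < lamR)
    (pL : ℝ → ℝ) (hpL : Measurable pL) (hpL0 : ∀ r, 0 ≤ pL r) (hpL1 : ∀ r, pL r ≤ 1)
    (hint : IntegrableOn (fun r => r * pL r) (Set.Ioi (0:ℝ)))
    (φ : ℝ → ℝ) (hφ : Measurable φ) (hφ0 : ∀ x, 0 ≤ φ x)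
    (hnorm : 4 * π ^ 2 * lamB * lamR *
      ∫ x in Set.Ioi (0:ℝ), x * besselK0 (2 * π * x * Real.sqrt (lamB * lamR)) = 1)
    (AL : ℝ)
    (hAL : AL = 4 * π ^ 2 * lamB * lamR *
      ∫ x in Set.Ioi (0:ℝ),
        x * (1 - Real.exp (-(2 * π * lamB * ∫ r in Set.Ioc (0:ℝ) (φ x), r * pL r))) *
          besselK0 (2 * π * x * Real.sqrt (lamB * lamR))) :
    AL ≤ 1 - Real.exp (-(2 * π * lamB * ∫ r in Set.Ioi (0:ℝ), r * pL r)) ∧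
    ((volume {x : ℝ | x ∈ Set.Ioi (0:ℝ) ∧
        (∫ r in Set.Ioc (0:ℝ) (φ x), r * pL r) < ∫ r in Set.Ioi (0:ℝ), r * pL r} ≠ 0) →
      AL < 1 - Real.exp (-(2 * π * lamB * ∫ r in Set.Ioi (0:ℝ), r * pL r))) ∧
    Real.exp (-(2 * π * lamB * ∫ r in Set.Ioi (0:ℝ), r * pL r)) ≤ 1 - AL :=
  association_probability_bounds_general lamB lamR hB hR pL hpL0 hint φ hnorm AL hAL
end

section
/- Let λ_R > 0 and c > 0. Then 4π² λ_B λ_R ∫_0^∞ x (1 − exp(−π λ_B c² x²)) K_0(2π x √(λ_B λ_R)) dx = 1 − (√(π λ_R)/c) · exp(π λ_R/(2c²)) · W_{−1/2,0}(π λ_R/c²), where W_{κ,μ} is the Whittaker W function. In particular, this value does not depend on λ_B. -/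
open Real MeasureTheory

/-- The Whittaker function `W_{−1/2,0}(z)` for `z > 0`, via the integral representation
`W_{−1/2,0}(z) = e^{−z/2} z^{−1/2} ∫_0^∞ (1 + t/z)⁻¹ e^{−t} dt`. -/
noncomputable def whittakerWnegHalfZero (z : ℝ) : ℝ :=
  Real.exp (-(z / 2)) * z ^ (-(1/2 : ℝ)) * ∫ t in Set.Ioi (0:ℝ), (1 + t / z)⁻¹ * Real.exp (-t)

/-!
Substituting `s = (w/2) eᵗ` in `K₀(w) = ½ ∫_ℝ e^{-w cosh t} dt` gives
`K₀(w) = ½ ∫₀^∞ e^{-s - w²/(4s)} ds/s`. After exchanging the order of integration the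
`x`-integral is elementary, `∫₀^∞ x e^{-p x²} dx = 1/(2p)`, and what remains is
`a⁻² ∫₀^∞ e^{-s} (1 - (1 + s/z)⁻¹) ds` with `z = a²/(4b)`, where the second part is the
integral representation of `√z e^{z/2} W_{-1/2,0}(z)`. With `a = 2π√(λ_B λ_R)` and
`b = π λ_B c²` we get `a² = 4π² λ_B λ_R` and `z = π λ_R / c²`, so `λ_B` cancels.
-/

open Set

theorem integral_mul_exp_neg_mul_sq_Ioi {b : ℝ} (hb : 0 < b) :
    ∫ x in Ioi (0:ℝ), x * exp (-b * x ^ 2) = (2 * b)⁻¹ := by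
  apply Complex.ofReal_injective
  rw [← integral_complex_ofReal]
  push_cast
  exact integral_mul_cexp_neg_mul_sq (b := (b : ℂ)) (by simpa using hb)

theorem integrableOn_inv_one_add_div_mul_exp_neg {z : ℝ} (hz : 0 < z) :
    IntegrableOn (fun t : ℝ => (1 + t / z)⁻¹ * exp (-t)) (Ioi 0) := by
  refine (integrableOn_exp_neg_Ioi 0).mono' (by fun_prop) ?_
  filter_upwards [ae_restrict_mem measurableSet_Ioi] with t (ht : 0 < t)
  have hle : (1 + t / z)⁻¹ ≤ 1 := inv_le_one_of_one_le₀ (by linarith [div_pos ht hz])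
  rw [norm_mul, norm_of_nonneg (by positivity), norm_of_nonneg (exp_pos _).le]
  exact mul_le_of_le_one_left (exp_pos _).le hle

theorem integral_exp_neg_mul_cosh (w : ℝ) : ∫ t, exp (-(w * cosh t)) = 2 * besselK0 w := by
  rw [besselK0, ← integral_comp_abs (f := fun t => exp (-(w * cosh t)))]
  simp only [cosh_abs]

theorem besselK0_eq_half_integral {w : ℝ} (hw : 0 < w) :
    besselK0 w = 1 / 2 * ∫ s in Ioi (0:ℝ), exp (-(s + w ^ 2 / (4 * s))) / s := by
  set f : ℝ → ℝ := fun t => w / 2 * exp t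
  have himage : f '' univ = Ioi 0 := by
    rw [image_univ, show f = (w / 2 * ·) ∘ exp from rfl, range_comp, range_exp,
      image_mul_left_Ioi (by positivity), mul_zero]
  have hinj : InjOn f univ := fun t _ u _ h =>
    exp_injective (mul_left_cancel₀ (by positivity) h)
  have hsubst := integral_image_eq_integral_abs_deriv_smul MeasurableSet.univ
    (fun t _ => ((hasDerivAt_exp t).const_mul (w / 2)).hasDerivWithinAt) hinj
    (fun s => exp (-(s + w ^ 2 / (4 * s))) / s)
  rw [himage, Measure.restrict_univ] at hsubst
  rw [hsubst, ← mul_right_inj' two_ne_zero, ← integral_exp_neg_mul_cosh, ← mul_assoc,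
    mul_one_div_cancel two_ne_zero, one_mul]
  congr 1 with t
  have hft : 0 < f t := by positivity
  rw [abs_of_pos hft, smul_eq_mul, mul_div_cancel₀ _ hft.ne', cosh_eq, exp_neg t]
  congr 1
  field_simp
  ring

theorem sqrt_mul_exp_mul_whittakerWnegHalfZero {z : ℝ} (hz : 0 < z) :
    √z * exp (z / 2) * whittakerWnegHalfZero z
      = ∫ t in Ioi (0:ℝ), (1 + t / z)⁻¹ * exp (-t) := by
  have hsqrt : z ^ (-(1 / 2 : ℝ)) = (√z)⁻¹ := by rw [rpow_neg hz.le, sqrt_eq_rpow]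
  have hsqrt_ne : √z ≠ 0 := (sqrt_pos.2 hz).ne'
  rw [whittakerWnegHalfZero, hsqrt]
  field_simp
  rw [← exp_add, add_neg_cancel, exp_zero, one_mul]

noncomputable def besselDoubleIntegrand (a b x s : ℝ) : ℝ :=
  x * (1 - exp (-(b * x ^ 2))) * (exp (-(s + (a * x) ^ 2 / (4 * s))) / s)

section besselDoubleIntegrand

variable {a b : ℝ}

theorem besselDoubleIntegrand_eq (x s : ℝ) :
    besselDoubleIntegrand a b x s = exp (-s) / s *
      (x * exp (-(a ^ 2 / (4 * s)) * x ^ 2) - x * exp (-(a ^ 2 / (4 * s) + b) * x ^ 2)) := by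
  have hsplit : exp (-(a ^ 2 / (4 * s) + b) * x ^ 2)
      = exp (-(a ^ 2 / (4 * s)) * x ^ 2) * exp (-(b * x ^ 2)) := by
    rw [← exp_add]; ring_nf
  rw [besselDoubleIntegrand, hsplit, neg_add, exp_add]
  ring_nf

theorem besselDoubleIntegrand_nonneg (hb : 0 ≤ b) {x s : ℝ} (hx : 0 ≤ x) (hs : 0 ≤ s) :
    0 ≤ besselDoubleIntegrand a b x s := by
  have : 0 ≤ 1 - exp (-(b * x ^ 2)) :=
    sub_nonneg.2 (exp_le_one_iff.2 (neg_nonpos.2 (by positivity)))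
  unfold besselDoubleIntegrand
  positivity

theorem integral_besselDoubleIntegrand_snd (ha : 0 < a) {x : ℝ} (hx : 0 < x) :
    ∫ s in Ioi (0:ℝ), besselDoubleIntegrand a b x s
      = 2 * (x * (1 - exp (-(b * x ^ 2))) * besselK0 (a * x)) := by
  simp only [besselDoubleIntegrand]
  rw [integral_const_mul, besselK0_eq_half_integral (mul_pos ha hx)]
  ring

theorem integrableOn_besselDoubleIntegrand_fst (ha : 0 < a) (hb : 0 < b) {s : ℝ} (hs : 0 < s) :
    IntegrableOn (besselDoubleIntegrand a b · s) (Ioi 0) := by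
  have hp : 0 < a ^ 2 / (4 * s) := by positivity
  simp only [besselDoubleIntegrand_eq]
  exact (((integrable_mul_exp_neg_mul_sq hp).sub
    (integrable_mul_exp_neg_mul_sq (add_pos hp hb))).const_mul _).integrableOn

theorem integral_besselDoubleIntegrand_fst (ha : 0 < a) (hb : 0 < b) {s : ℝ} (hs : 0 < s) :
    ∫ x in Ioi (0:ℝ), besselDoubleIntegrand a b x s
      = 2 / a ^ 2 * (exp (-s) - (1 + s / (a ^ 2 / (4 * b)))⁻¹ * exp (-s)) := by
  have hp : 0 < a ^ 2 / (4 * s) := by positivity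
  simp only [besselDoubleIntegrand_eq]
  rw [integral_const_mul, integral_sub
    (integrable_mul_exp_neg_mul_sq hp).integrableOn
    (integrable_mul_exp_neg_mul_sq (add_pos hp hb)).integrableOn,
    integral_mul_exp_neg_mul_sq_Ioi hp, integral_mul_exp_neg_mul_sq_Ioi (add_pos hp hb)]
  field_simp
  ring

/-- Checked through the `x`-sections, where all integrals are explicit, so no bound on `K₀` is
needed. -/
theorem integrable_besselDoubleIntegrand (ha : 0 < a) (hb : 0 < b) :
    Integrable (Function.uncurry (besselDoubleIntegrand a b))
      ((volume.restrict (Ioi 0)).prod (volume.restrict (Ioi 0))) := by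
  have hmeas : Measurable (Function.uncurry (besselDoubleIntegrand a b)) := by
    unfold besselDoubleIntegrand; fun_prop
  rw [integrable_prod_iff' hmeas.aestronglyMeasurable]
  refine ⟨?_, ?_⟩
  · filter_upwards [ae_restrict_mem measurableSet_Ioi] with s hs
    exact integrableOn_besselDoubleIntegrand_fst ha hb hs
  · refine (((integrableOn_exp_neg_Ioi 0).sub
      (integrableOn_inv_one_add_div_mul_exp_neg (by positivity : 0 < a ^ 2 / (4 * b)))).const_mul
      (2 / a ^ 2)).congr ?_
    filter_upwards [ae_restrict_mem measurableSet_Ioi] with s (hs : 0 < s)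
    rw [Pi.sub_apply, ← integral_besselDoubleIntegrand_fst ha hb hs]
    exact setIntegral_congr_fun measurableSet_Ioi fun x (hx : 0 < x) =>
      (norm_of_nonneg (besselDoubleIntegrand_nonneg hb.le hx.le hs.le)).symm

theorem integral_mul_one_sub_exp_mul_besselK0 (ha : 0 < a) (hb : 0 < b) :
    ∫ x in Ioi (0:ℝ), x * (1 - exp (-(b * x ^ 2))) * besselK0 (a * x)
      = (1 - ∫ s in Ioi (0:ℝ), (1 + s / (a ^ 2 / (4 * b)))⁻¹ * exp (-s)) / a ^ 2 := by
  have hz : 0 < a ^ 2 / (4 * b) := by positivity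
  calc _ = 1 / 2 * ∫ x in Ioi (0:ℝ), ∫ s in Ioi (0:ℝ), besselDoubleIntegrand a b x s := by
        rw [← integral_const_mul]
        refine setIntegral_congr_fun measurableSet_Ioi fun x hx => ?_
        rw [integral_besselDoubleIntegrand_snd ha hx]
        ring
    _ = 1 / 2 * ∫ s in Ioi (0:ℝ), ∫ x in Ioi (0:ℝ), besselDoubleIntegrand a b x s := by
        rw [integral_integral_swap (integrable_besselDoubleIntegrand ha hb)]
    _ = 1 / 2 * ∫ s in Ioi (0:ℝ),
          2 / a ^ 2 * (exp (-s) - (1 + s / (a ^ 2 / (4 * b)))⁻¹ * exp (-s)) := by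
        congr 1
        exact setIntegral_congr_fun measurableSet_Ioi fun s hs =>
          integral_besselDoubleIntegrand_fst ha hb hs
    _ = _ := by
        rw [integral_const_mul, integral_sub (integrableOn_exp_neg_Ioi 0)
          (integrableOn_inv_one_add_div_mul_exp_neg hz), integral_exp_neg_Ioi_zero]
        ring

end besselDoubleIntegrand

/-- Closed form of the LoS association probability in the special case `p_L ≡ 1`,
`α_L = α_R`:  it equals `1 − (√(πλ_R)/c) exp(πλ_R/(2c²)) W_{−1/2,0}(πλ_R/c²)`;
in particular, the left-hand side does not depend on `λ_B`. -/
theorem association_probability_closed_form_equal (lamB lamR c : ℝ)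
    (hB : 0 < lamB) (hR : 0 < lamR) (hc : 0 < c) :
    (4 * π ^ 2 * lamB * lamR *
      ∫ x in Set.Ioi (0:ℝ),
        x * (1 - Real.exp (-(π * lamB * c ^ 2 * x ^ 2))) *
          besselK0 (2 * π * x * Real.sqrt (lamB * lamR)) =
    1 - (Real.sqrt (π * lamR) / c) * Real.exp (π * lamR / (2 * c ^ 2)) *
      whittakerWnegHalfZero (π * lamR / c ^ 2)) ∧
    (∀ lamB' : ℝ, 0 < lamB' →
      4 * π ^ 2 * lamB * lamR *
        (∫ x in Set.Ioi (0:ℝ),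
          x * (1 - Real.exp (-(π * lamB * c ^ 2 * x ^ 2))) *
            besselK0 (2 * π * x * Real.sqrt (lamB * lamR))) =
      4 * π ^ 2 * lamB' * lamR *
        ∫ x in Set.Ioi (0:ℝ),
          x * (1 - Real.exp (-(π * lamB' * c ^ 2 * x ^ 2))) *
            besselK0 (2 * π * x * Real.sqrt (lamB' * lamR))) := by
  have closed_form : ∀ lamB : ℝ, 0 < lamB →
      4 * π ^ 2 * lamB * lamR *
        ∫ x in Set.Ioi (0:ℝ),
          x * (1 - Real.exp (-(π * lamB * c ^ 2 * x ^ 2))) *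
            besselK0 (2 * π * x * Real.sqrt (lamB * lamR)) =
      1 - (Real.sqrt (π * lamR) / c) * Real.exp (π * lamR / (2 * c ^ 2)) *
        whittakerWnegHalfZero (π * lamR / c ^ 2) := by
    intro lamB hB
    set a := 2 * π * √(lamB * lamR)
    have ha : 0 < a := by positivity
    have ha_sq : a ^ 2 = 4 * π ^ 2 * lamB * lamR := by
      rw [mul_pow, sq_sqrt (by positivity)]; ring
    have hz : a ^ 2 / (4 * (π * lamB * c ^ 2)) = π * lamR / c ^ 2 := by
      rw [ha_sq]; field_simp
    have hprefactor : √(π * lamR) / c * exp (π * lamR / (2 * c ^ 2))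
        = √(π * lamR / c ^ 2) * exp (π * lamR / c ^ 2 / 2) := by
      rw [sqrt_div' _ (by positivity), sqrt_sq hc.le]; ring_nf
    simp_rw [show ∀ x, 2 * π * x * √(lamB * lamR) = a * x from fun x => by ring]
    rw [integral_mul_one_sub_exp_mul_besselK0 ha (by positivity), hz, hprefactor,
      sqrt_mul_exp_mul_whittakerWnegHalfZero (by positivity), ← ha_sq,
      mul_div_cancel₀ _ (pow_ne_zero 2 ha.ne')]
  exact ⟨closed_form lamB hB, fun lamB' hB' => by rw [closed_form lamB hB, closed_form lamB' hB']⟩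
end
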